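/- arXiv:2605.03064 — 3 statements merged into one kernel-verified Lean document; each statement's English description precedes it below -/
import Mathlib

section
/- RPL and LΠ½(⊙⁻, →_P⁻) have the same expressive power: for each formula of RPL there exists an equivalent formula of LΠ½(⊙⁻, →_P⁻), and for each formula of LΠ½(⊙⁻, →_P⁻) there exists an equivalent formula of RPL. -/
/-- Terms of ℚ[ReLU, x_i]_{i∈ℕ}; variables are indexed by ℕ. -/
inductive RTerm : Type where
  | const : ℚ → RTerm
  | var : ℕ → RTerm
  | add : RTerm → RTerm → RTerm
  | mul : RTerm → RTerm → RTerm
  | relu : RTerm → RTerm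

/-- Value of a term under an evaluation map `E : ℕ → ℝ`. -/
def RTerm.eval (E : ℕ → ℝ) : RTerm → ℝ
  | .const r => (r : ℝ)
  | .var x => E x
  | .add t t' => t.eval E + t'.eval E
  | .mul t t' => t.eval E * t'.eval E
  | .relu t => max 0 (t.eval E)

/-- Degree of a term. -/
def RTerm.deg : RTerm → ℕ
  | .const _ => 0
  | .var _ => 1
  | .add t t' => max t.deg t'.deg
  | .mul t t' => t.deg + t'.deg
  | .relu t => t.deg

/-- Subterms of a term. -/
def RTerm.subt : RTerm → List RTerm
  | .const r => [.const r]
  | .var x => [.var x]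
  | .add t t' => t.subt ++ t'.subt ++ [.add t t']
  | .mul t t' => t.subt ++ t'.subt ++ [.mul t t']
  | .relu t => t.subt ++ [.relu t]

/-- Proto-neurons. -/
inductive RTerm.ProtoNeuron : RTerm → Prop where
  | const (r : ℚ) : RTerm.ProtoNeuron (.const r)
  | var (x : ℕ) : RTerm.ProtoNeuron (.var x)
  | add {t t'} : RTerm.ProtoNeuron t → RTerm.ProtoNeuron t' → RTerm.ProtoNeuron (.add t t')
  | mul {t t'} : RTerm.ProtoNeuron t → RTerm.ProtoNeuron t' → t.deg + t'.deg ≤ 1 →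
      RTerm.ProtoNeuron (.mul t t')
  | relu {t} : RTerm.ProtoNeuron t → RTerm.ProtoNeuron (.relu t)

/-- `ReLU (w₁·n₁ + (w₂·n₂ + (⋯ + b)))`. -/
def layerNeuron (ws : List (ℚ × RTerm)) (b : ℚ) : RTerm :=
  .relu (ws.foldr (fun wt acc => .add (.mul (.const wt.1) wt.2) acc) (.const b))

/-- Rational-parameter ReLU-activated neural networks of a given depth,
identified with the tuples of their output neurons. -/
inductive IsNN : ℕ → List RTerm → Prop where
  | input (ys : List ℕ) : ys ≠ [] → ys.Nodup → IsNN 0 (ys.map RTerm.var)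
  | layer {d : ℕ} {prev : List RTerm} (hprev : IsNN d prev)
      (params : List (List ℚ × ℚ)) (hne : params ≠ [])
      (hlen : ∀ p ∈ params, p.1.length = prev.length) :
      IsNN (d + 1) (params.map fun p => layerNeuron (p.1.zip prev) p.2)

/-- A neuron is a component of some neural network. -/
def IsNeuron (t : RTerm) : Prop := ∃ d N, IsNN d N ∧ t ∈ N

/-- Formulae of RPL(⊙): truth constants r̄ for r ∈ ℚ ∩ [0,1], proposition
symbols, →_L and ⊙. -/
inductive RPLForm : Type where
  | const : {r : ℚ // 0 ≤ r ∧ r ≤ 1} → RPLForm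
  | prop : ℕ → RPLForm
  | impL : RPLForm → RPLForm → RPLForm
  | conj : RPLForm → RPLForm → RPLForm

/-- A valuation assigns to every proposition symbol a value in [0,1]. -/
def IsValuation (V : ℕ → ℝ) : Prop := ∀ p, 0 ≤ V p ∧ V p ≤ 1

/-- Truth value of an RPL(⊙)-formula under a valuation. -/
def RPLForm.val (V : ℕ → ℝ) : RPLForm → ℝ
  | .const r => (r.1 : ℝ)
  | .prop p => V p
  | .impL φ ψ => min 1 (1 - φ.val V + ψ.val V)
  | .conj φ ψ => φ.val V * ψ.val V

/-- Formulae with no proposition symbols. -/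
def RPLForm.propFree : RPLForm → Prop
  | .const _ => True
  | .prop _ => False
  | .impL φ ψ => φ.propFree ∧ ψ.propFree
  | .conj φ ψ => φ.propFree ∧ ψ.propFree

/-- RPL: the ⊙-free fragment of RPL(⊙). -/
def RPLForm.noConj : RPLForm → Prop
  | .const _ => True
  | .prop _ => True
  | .impL φ ψ => φ.noConj ∧ ψ.noConj
  | .conj _ _ => False

/-- Łukasiewicz logic: the only truth constant is 0̄ and there is no ⊙. -/
def RPLForm.isLuk : RPLForm → Prop
  | .const r => r.1 = 0
  | .prop _ => True
  | .impL φ ψ => φ.isLuk ∧ ψ.isLuk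
  | .conj _ _ => False

/-- The fragment RPL(⊙)_{≤ n}. -/
inductive RPLForm.InFrag : ℕ → RPLForm → Prop where
  | propfree {n φ} : RPLForm.propFree φ → RPLForm.InFrag n φ
  | prop {n} (p : ℕ) : RPLForm.InFrag (n + 1) (.prop p)
  | up {n φ} : RPLForm.InFrag n φ → RPLForm.InFrag (n + 1) φ
  | conj {n i j α β} : RPLForm.InFrag i α → RPLForm.InFrag j β → i + j ≤ n + 1 →
      RPLForm.InFrag (n + 1) (.conj α β)
  | impL {n φ ψ} : RPLForm.InFrag (n + 1) φ → RPLForm.InFrag (n + 1) ψ →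
      RPLForm.InFrag (n + 1) (.impL φ ψ)

/-- Formulae of LΠ½. -/
inductive LPiForm : Type where
  | zero : LPiForm
  | half : LPiForm
  | prop : ℕ → LPiForm
  | impL : LPiForm → LPiForm → LPiForm
  | conj : LPiForm → LPiForm → LPiForm
  | impP : LPiForm → LPiForm → LPiForm

/-- Truth value of an LΠ½-formula under a valuation. -/
noncomputable def LPiForm.val (V : ℕ → ℝ) : LPiForm → ℝ
  | .zero => 0
  | .half => 1 / 2
  | .prop p => V p
  | .impL φ ψ => min 1 (1 - φ.val V + ψ.val V)
  | .conj φ ψ => φ.val V * ψ.val V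
  | .impP φ ψ => if φ.val V ≤ ψ.val V then 1 else ψ.val V / φ.val V

/-- LΠ½-formulae with no proposition symbols (LΠ½_{≤0}). -/
def LPiForm.propFree : LPiForm → Prop
  | .zero => True
  | .half => True
  | .prop _ => False
  | .impL φ ψ => φ.propFree ∧ ψ.propFree
  | .conj φ ψ => φ.propFree ∧ ψ.propFree
  | .impP φ ψ => φ.propFree ∧ ψ.propFree

/-- LΠ½(→_P⁻): no proposition symbols in the scope of →_P. -/
inductive LPiForm.InPF : LPiForm → Prop where
  | base {φ} : LPiForm.propFree φ → LPiForm.InPF φ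
  | prop (p : ℕ) : LPiForm.InPF (.prop p)
  | impL {φ ψ} : LPiForm.InPF φ → LPiForm.InPF ψ → LPiForm.InPF (.impL φ ψ)
  | conj {φ ψ} : LPiForm.InPF φ → LPiForm.InPF ψ → LPiForm.InPF (.conj φ ψ)

/-- LΠ½(⊙⁻, →_P⁻): no proposition symbols in the scope of ⊙ or →_P. -/
inductive LPiForm.InPFF : LPiForm → Prop where
  | base {φ} : LPiForm.propFree φ → LPiForm.InPFF φ
  | prop (p : ℕ) : LPiForm.InPFF (.prop p)
  | impL {φ ψ} : LPiForm.InPFF φ → LPiForm.InPFF ψ → LPiForm.InPFF (.impL φ ψ)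

/-- The fragment LΠ½(→_P⁻)_{≤ n}. -/
inductive LPiForm.InFragPF : ℕ → LPiForm → Prop where
  | propfree {n φ} : LPiForm.propFree φ → LPiForm.InFragPF n φ
  | prop {n} (p : ℕ) : LPiForm.InFragPF (n + 1) (.prop p)
  | up {n φ} : LPiForm.InFragPF n φ → LPiForm.InFragPF (n + 1) φ
  | conj {n i j α β} : LPiForm.InFragPF i α → LPiForm.InFragPF j β → i + j ≤ n + 1 →
      LPiForm.InFragPF (n + 1) (.conj α β)
  | impL {n φ ψ} : LPiForm.InFragPF (n + 1) φ → LPiForm.InFragPF (n + 1) ψ →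
      LPiForm.InFragPF (n + 1) (.impL φ ψ)

/-- scale_k(x) = (k + x)/(2k). -/
noncomputable def scaleK (k x : ℝ) : ℝ := (k + x) / (2 * k)

/-- Equivalence of a term and an RPL(⊙)-formula (the bijection p ↦ x_p is
the identity on ℕ). -/
def TermFormEquiv (t : RTerm) (φ : RPLForm) : Prop :=
  ∀ (E V : ℕ → ℝ), IsValuation V → (∀ x, E x = V x) → t.eval E = φ.val V

/-- (i,k)-equivalence of a formula to a term. -/
def IKEquiv (i k : ℝ) (φ : RPLForm) (t : RTerm) : Prop :=
  ∀ E : ℕ → ℝ, (∀ x, -i ≤ E x ∧ E x ≤ i) →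
    φ.val (fun p => scaleK k (E p)) = scaleK k (t.eval E)

/-- k-equivalence of formulae. -/
def KEquiv (k : ℝ) (ψ φ : RPLForm) : Prop :=
  ∀ V V' : ℕ → ℝ, IsValuation V → IsValuation V' → (∀ p, V' p = scaleK k (V p)) →
    ψ.val V' = scaleK k (φ.val V)

/-- Equivalence of terms. -/
def TermEquiv (t t' : RTerm) : Prop := ∀ E : ℕ → ℝ, t.eval E = t'.eval E

/-- [0,1]-equivalence of terms. -/
def TermEquiv01 (t t' : RTerm) : Prop :=
  ∀ E : ℕ → ℝ, (∀ x, 0 ≤ E x ∧ E x ≤ 1) → t.eval E = t'.eval E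

/-- Equivalence of an RPL(⊙)-formula and an LΠ½-formula. -/
def RLEquiv (φ : RPLForm) (ψ : LPiForm) : Prop :=
  ∀ V : ℕ → ℝ, IsValuation V → φ.val V = ψ.val V

/-- The truth constant 0̄. -/
def RPLForm.zeroC : RPLForm := .const ⟨0, by norm_num⟩

/-- ¬_L φ := φ →_L 0̄. -/
def RPLForm.negL (φ : RPLForm) : RPLForm := φ.impL RPLForm.zeroC

/-- φ ⊕ ψ := ¬_L φ →_L ψ. -/
def RPLForm.oplus (φ ψ : RPLForm) : RPLForm := φ.negL.impL ψ

/-- φ ⊗ ψ := ¬_L (φ →_L ¬_L ψ). -/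
def RPLForm.otimes (φ ψ : RPLForm) : RPLForm := (φ.impL ψ.negL).negL

/-- φ ⊖ ψ := φ ⊗ ¬_L ψ  (semantics: max{0, V(φ) − V(ψ)}). -/
def RPLForm.ominus (φ ψ : RPLForm) : RPLForm := φ.otimes ψ.negL

/-- φ ⊕' ψ := (φ ⊖ ¼̄) ⊕ (ψ ⊖ ¼̄). -/
def RPLForm.oplus' (φ ψ : RPLForm) : RPLForm :=
  (φ.ominus (.const ⟨1/4, by norm_num⟩)).oplus (ψ.ominus (.const ⟨1/4, by norm_num⟩))

/-- The iterated sum ⨀_n. -/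
def RPLForm.bigOplus : ℕ → RPLForm → RPLForm
  | 0, _ => RPLForm.zeroC
  | n + 1, φ => (RPLForm.bigOplus n φ).oplus φ

/-- The iterated operator ⨀'_n; `Nat.clog 2 n` is the least j with n ≤ 2^j. -/
def RPLForm.bigOplus' : ℕ → RPLForm → RPLForm
  | 0, _ => .const ⟨1/2, by norm_num⟩
  | 1, φ => φ
  | n + 2, φ =>
      RPLForm.oplus' (RPLForm.bigOplus' (2 ^ (Nat.clog 2 (n + 2) - 1)) φ)
        (RPLForm.bigOplus' ((n + 2) - 2 ^ (Nat.clog 2 (n + 2) - 1)) φ)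
  termination_by n _ => n
  decreasing_by
  · exact Nat.pow_pred_clog_lt_self (b := 2) (x := n + 2) (by norm_num) (by omega)
  · have h1 : 0 < 2 ^ (Nat.clog 2 (n + 2) - 1) := by positivity
    omega

theorem inv2k_mem (k : ℕ) (hk : 1 ≤ k) : 0 ≤ (1 / (2 * (k : ℚ))) ∧ (1 / (2 * (k : ℚ))) ≤ 1 := by
  have h : (1 : ℚ) ≤ (k : ℚ) := by exact_mod_cast hk
  constructor
  · positivity
  · rw [div_le_one (by linarith)]
    linarith

/-- φ ⊙^k ψ := ⨀_k((⨀_2(φ ⊙ ψ) ⊕ (1/(2k))̄) ⊖ (φ ⊕' ψ)). -/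
def RPLForm.odotPow (k : ℕ) (hk : 1 ≤ k) (φ ψ : RPLForm) : RPLForm :=
  RPLForm.bigOplus k
    (((RPLForm.bigOplus 2 (φ.conj ψ)).oplus
        (.const ⟨1 / (2 * (k : ℚ)), inv2k_mem k hk⟩)).ominus (φ.oplus' ψ))

section Aux

/-- Every formula takes values in [0,1]. -/
lemma LPiForm.val_mem (V : ℕ → ℝ) (hV : IsValuation V) (φ : LPiForm) :
    0 ≤ φ.val V ∧ φ.val V ≤ 1 := by
  induction φ with
  | zero => simp [LPiForm.val]
  | half => norm_num [LPiForm.val]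
  | prop p => exact hV p
  | impL φ ψ ih1 ih2 =>
      refine ⟨le_min one_pos.le (by linarith [ih1.2, ih2.1]), min_le_left _ _⟩
  | conj φ ψ ih1 ih2 =>
      simp only [LPiForm.val]
      constructor
      · exact mul_nonneg ih1.1 ih2.1
      · nlinarith [ih1.1, ih1.2, ih2.1, ih2.2]
  | impP φ ψ ih1 ih2 =>
      simp only [LPiForm.val]
      split
      · norm_num
      · next h =>
          have hb : ψ.val V < φ.val V := lt_of_not_ge h
          have h0 : 0 < φ.val V := lt_of_le_of_lt ih2.1 hb
          exact ⟨div_nonneg ih2.1 h0.le, by rw [div_le_one h0]; exact hb.le⟩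

def LPiOne : LPiForm := .impL .zero .zero

def halfPow : ℕ → LPiForm
  | 0 => LPiOne
  | n + 1 => .conj .half (halfPow n)

def oplusL (a b : LPiForm) : LPiForm := .impL (.impL a .zero) b

def natMulL : ℕ → LPiForm → LPiForm
  | 0, _ => .zero
  | n + 1, a => oplusL (natMulL n a) a

def invDen (q : ℕ) : LPiForm := .impP (natMulL q (halfPow q)) (halfPow q)

def mkConst (r : ℚ) : LPiForm := natMulL r.num.toNat (invDen r.den)

lemma propFree_halfPow (n : ℕ) : (halfPow n).propFree := by
  induction n with
  | zero => exact ⟨trivial, trivial⟩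
  | succ n ih => exact ⟨trivial, ih⟩

lemma propFree_natMulL (n : ℕ) (a : LPiForm) (ha : a.propFree) : (natMulL n a).propFree := by
  induction n with
  | zero => trivial
  | succ n ih => exact ⟨⟨ih, trivial⟩, ha⟩

lemma propFree_invDen (q : ℕ) : (invDen q).propFree :=
  ⟨propFree_natMulL q _ (propFree_halfPow q), propFree_halfPow q⟩

lemma propFree_mkConst (r : ℚ) : (mkConst r).propFree :=
  propFree_natMulL _ _ (propFree_invDen _)

lemma val_halfPow (V : ℕ → ℝ) (n : ℕ) : (halfPow n).val V = (2 : ℝ)⁻¹ ^ n := by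
  induction n with
  | zero => norm_num [halfPow, LPiOne, LPiForm.val]
  | succ n ih => simp [halfPow, LPiForm.val, ih, pow_succ]; ring

lemma val_oplusL (V : ℕ → ℝ) (a b : LPiForm) (ha : 0 ≤ a.val V) :
    (oplusL a b).val V = min 1 (a.val V + b.val V) := by
  simp only [oplusL, LPiForm.val, add_zero]
  rw [min_eq_right (by linarith : 1 - a.val V ≤ 1)]
  ring_nf

lemma val_natMulL (V : ℕ → ℝ) (a : LPiForm) (ha : 0 ≤ a.val V) (n : ℕ) :
    (natMulL n a).val V = min 1 (n * a.val V) := by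
  induction n with
  | zero => simp [natMulL, LPiForm.val]
  | succ n ih =>
      rw [natMulL, val_oplusL V _ _ (by rw [ih]; positivity), ih]
      rcases le_or_gt 1 (n * a.val V) with h | h
      · rw [min_eq_left h, min_eq_left (by linarith), min_eq_left (by push_cast; nlinarith)]
      · rw [min_eq_right h.le]
        push_cast
        ring_nf

lemma val_invDen (V : ℕ → ℝ) (q : ℕ) (hq : 1 ≤ q) : (invDen q).val V = (q : ℝ)⁻¹ := by
  have hq2 : (q : ℝ) ≤ 2 ^ q := by exact_mod_cast Nat.le_of_lt (Nat.lt_two_pow_self (n := q))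
  have hpow : (0:ℝ) < (2:ℝ)⁻¹ ^ q := by positivity
  have hval : (natMulL q (halfPow q)).val V = q * (2:ℝ)⁻¹ ^ q := by
    rw [val_natMulL V _ (by rw [val_halfPow]; positivity), val_halfPow]
    apply min_eq_right
    rw [inv_pow, ← div_eq_mul_inv, div_le_one (by positivity)]
    exact hq2
  simp only [invDen, LPiForm.val, hval, val_halfPow]
  have hq1 : (1:ℝ) ≤ (q:ℝ) := by exact_mod_cast hq
  rcases eq_or_lt_of_le hq1 with h | h
  · rw [if_pos (by nlinarith)]
    rw [← h]; norm_num
  · rw [if_neg (by nlinarith)]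
    rw [div_eq_iff (by positivity)]
    field_simp
lemma val_mkConst (V : ℕ → ℝ) (r : ℚ) (h0 : 0 ≤ r) (h1 : r ≤ 1) :
    (mkConst r).val V = (r : ℝ) := by
  have hnum : (0:ℤ) ≤ r.num := Rat.num_nonneg.mpr h0
  have hd : 1 ≤ r.den := r.pos
  rw [mkConst, val_natMulL V _ (by rw [val_invDen V _ hd]; positivity), val_invDen V _ hd]
  have hcast : (r.num.toNat : ℝ) = (r.num : ℝ) := by exact_mod_cast Int.toNat_of_nonneg hnum
  rw [hcast]
  have hrd : (r.num : ℝ) * ((r.den : ℝ))⁻¹ = (r : ℝ) := by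
    rw [← div_eq_mul_inv, Rat.cast_def]
  rw [hrd]
  exact min_eq_right (by exact_mod_cast h1)

/-- Translation RPL → LΠ½. -/
def toLPi : RPLForm → LPiForm
  | .const r => mkConst r.1
  | .prop p => .prop p
  | .impL φ ψ => .impL (toLPi φ) (toLPi ψ)
  | .conj _ _ => .zero

/-- Rational value of a prop-free LΠ½ formula. -/
def qval : LPiForm → ℚ
  | .zero => 0
  | .half => 1/2
  | .prop _ => 0
  | .impL φ ψ => min 1 (1 - qval φ + qval ψ)
  | .conj φ ψ => qval φ * qval ψ
  | .impP φ ψ => if qval φ ≤ qval ψ then 1 else qval ψ / qval φ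

lemma qval_spec (φ : LPiForm) (h : φ.propFree) :
    (0 ≤ qval φ ∧ qval φ ≤ 1) ∧ ∀ V : ℕ → ℝ, φ.val V = (qval φ : ℝ) := by
  induction φ with
  | zero => exact ⟨by norm_num [qval], fun V => by norm_num [qval, LPiForm.val]⟩
  | half => exact ⟨by norm_num [qval], fun V => by norm_num [qval, LPiForm.val]⟩
  | prop p => exact absurd h (by simp [LPiForm.propFree])
  | impL φ ψ ih1 ih2 =>
      obtain ⟨⟨h10, h11⟩, hv1⟩ := ih1 h.1
      obtain ⟨⟨h20, h21⟩, hv2⟩ := ih2 h.2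
      refine ⟨⟨le_min (by norm_num) (by linarith), min_le_left _ _⟩, fun V => ?_⟩
      simp only [LPiForm.val, qval, hv1, hv2]
      push_cast
      rfl
  | conj φ ψ ih1 ih2 =>
      obtain ⟨⟨h10, h11⟩, hv1⟩ := ih1 h.1
      obtain ⟨⟨h20, h21⟩, hv2⟩ := ih2 h.2
      refine ⟨⟨by simp only [qval]; exact mul_nonneg h10 h20,
        by simp only [qval]; nlinarith⟩, fun V => ?_⟩
      simp only [LPiForm.val, qval, hv1, hv2]
      push_cast
      rfl
  | impP φ ψ ih1 ih2 =>
      obtain ⟨⟨h10, h11⟩, hv1⟩ := ih1 h.1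
      obtain ⟨⟨h20, h21⟩, hv2⟩ := ih2 h.2
      constructor
      · simp only [qval]
        split
        · norm_num
        · next hle =>
            have : qval ψ < qval φ := lt_of_not_ge hle
            have h0 : 0 < qval φ := lt_of_le_of_lt h20 this
            exact ⟨div_nonneg h20 h0.le, by rw [div_le_one h0]; exact this.le⟩
      · intro V
        simp only [LPiForm.val, qval, hv1, hv2]
        split
        · next hle => rw [if_pos (by exact_mod_cast hle)]; norm_num
        · next hle =>
            rw [if_neg (by exact_mod_cast hle)]
            push_cast
            rfl

/-- Translation LΠ½ → RPL. -/
def toRPL : LPiForm → RPLForm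
  | .zero => RPLForm.zeroC
  | .half => .const ⟨1/2, by norm_num⟩
  | .prop p => .prop p
  | .impL φ ψ => .impL (toRPL φ) (toRPL ψ)
  | .conj φ ψ => .const ⟨max 0 (min 1 (qval (.conj φ ψ))),
      ⟨le_max_left _ _, max_le (by norm_num) (min_le_left _ _)⟩⟩
  | .impP φ ψ => .const ⟨max 0 (min 1 (qval (.impP φ ψ))),
      ⟨le_max_left _ _, max_le (by norm_num) (min_le_left _ _)⟩⟩

lemma toRPL_propFree (φ : LPiForm) (h : φ.propFree) :
    (toRPL φ).noConj ∧ RLEquiv (toRPL φ) φ := by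
  induction φ with
  | zero => exact ⟨trivial, fun V _ => by norm_num [toRPL, RPLForm.zeroC, RPLForm.val, LPiForm.val]⟩
  | half => exact ⟨trivial, fun V _ => by norm_num [toRPL, RPLForm.val, LPiForm.val]⟩
  | prop p => exact absurd h (by simp [LPiForm.propFree])
  | impL φ ψ ih1 ih2 =>
      obtain ⟨hn1, he1⟩ := ih1 h.1
      obtain ⟨hn2, he2⟩ := ih2 h.2
      exact ⟨⟨hn1, hn2⟩, fun V hV => by
        simp only [toRPL, RPLForm.val, LPiForm.val, he1 V hV, he2 V hV]⟩
  | conj φ ψ ih1 ih2 =>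
      obtain ⟨⟨hq0, hq1⟩, hv⟩ := qval_spec _ h
      refine ⟨trivial, fun V hV => ?_⟩
      rw [hv V]
      simp only [toRPL, RPLForm.val]
      rw [min_eq_right hq1, max_eq_right hq0]
  | impP φ ψ ih1 ih2 =>
      obtain ⟨⟨hq0, hq1⟩, hv⟩ := qval_spec _ h
      refine ⟨trivial, fun V hV => ?_⟩
      rw [hv V]
      simp only [toRPL, RPLForm.val]
      rw [min_eq_right hq1, max_eq_right hq0]

end Aux

/-- RPL and LΠ½(⊙⁻, →_P⁻) have the same expressive power. -/
theorem RPL_eq_LPHodotminus_impPminus :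
    (∀ φ : RPLForm, RPLForm.noConj φ →
      ∃ ψ : LPiForm, LPiForm.InPFF ψ ∧ RLEquiv φ ψ) ∧
    (∀ ψ : LPiForm, LPiForm.InPFF ψ →
      ∃ φ : RPLForm, RPLForm.noConj φ ∧ RLEquiv φ ψ) := by
  constructor
  · intro φ hφ
    refine ⟨toLPi φ, ?_, ?_⟩
    · induction φ with
      | const r => exact LPiForm.InPFF.base (propFree_mkConst r.1)
      | prop p => exact LPiForm.InPFF.prop p
      | impL φ ψ ih1 ih2 => exact LPiForm.InPFF.impL (ih1 hφ.1) (ih2 hφ.2)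
      | conj φ ψ ih1 ih2 => exact absurd hφ (by simp [RPLForm.noConj])
    · induction φ with
      | const r =>
          intro V hV
          simp only [toLPi, RPLForm.val]
          rw [val_mkConst V r.1 r.2.1 r.2.2]
      | prop p => intro V hV; rfl
      | impL φ ψ ih1 ih2 =>
          intro V hV
          simp only [toLPi, RPLForm.val, LPiForm.val, ih1 hφ.1 V hV, ih2 hφ.2 V hV]
      | conj φ ψ ih1 ih2 => exact absurd hφ (by simp [RPLForm.noConj])
  · intro ψ hψ
    refine ⟨toRPL ψ, ?_⟩
    induction hψ with
    | base h => exact toRPL_propFree _ h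
    | prop p => exact ⟨trivial, fun V hV => rfl⟩
    | impL h1 h2 ih1 ih2 =>
        exact ⟨⟨ih1.1, ih2.1⟩, fun V hV => by
          simp only [toRPL, RPLForm.val, LPiForm.val, ih1.2 V hV, ih2.2 V hV]⟩
end

section
/- For every integer k ≥ 8, every valuation V and all formulae φ and ψ of RPL(⊙): if V(φ) = scale_k(ℓ) and V(ψ) = scale_k(ℓ') for some ℓ, ℓ' ∈ [−√k, √k], then V(φ ⊙^k ψ) = scale_k(ℓ·ℓ'). -/
lemma val_oplus_aux (V : ℕ → ℝ) (φ ψ : RPLForm) (h : 0 ≤ φ.val V) :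
    (φ.oplus ψ).val V = min 1 (φ.val V + ψ.val V) := by
  simp only [RPLForm.oplus, RPLForm.negL, RPLForm.zeroC, RPLForm.val, Rat.cast_zero, add_zero]
  rw [min_eq_right (by linarith : 1 - φ.val V ≤ 1)]
  ring_nf

lemma val_ominus_aux (V : ℕ → ℝ) (φ ψ : RPLForm) (hx : φ.val V ≤ 1)
    (hy0 : 0 ≤ ψ.val V) (hy1 : ψ.val V ≤ 1) :
    (φ.ominus ψ).val V = max 0 (φ.val V - ψ.val V) := by
  simp only [RPLForm.ominus, RPLForm.otimes, RPLForm.negL, RPLForm.zeroC, RPLForm.val,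
    Rat.cast_zero, add_zero]
  set x := φ.val V; set y := ψ.val V
  rw [min_eq_right (by linarith : 1 - y ≤ 1)]
  rw [min_eq_right (by linarith : 1 - (1 - y) ≤ 1)]
  rcases le_total (1 - x + (1 - (1 - y))) 1 with h1 | h1
  · rw [min_eq_right h1]
    rw [min_eq_right (by linarith), max_eq_right (by linarith)]
    ring_nf
  · rw [min_eq_left h1]
    rw [min_eq_right (by linarith), max_eq_left (by linarith)]
    ring_nf

lemma val_bigOplus_aux (V : ℕ → ℝ) (φ : RPLForm) (h : 0 ≤ φ.val V) (n : ℕ) :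
    (RPLForm.bigOplus n φ).val V = min 1 (n * φ.val V) := by
  induction n with
  | zero => norm_num [RPLForm.bigOplus, RPLForm.zeroC, RPLForm.val]
  | succ n ih =>
    rw [RPLForm.bigOplus, val_oplus_aux _ _ _ (by rw [ih]; positivity), ih]
    push_cast
    rcases le_total (1:ℝ) ((n:ℝ) * φ.val V) with h1 | h1
    · rw [min_eq_left h1, min_eq_left (by linarith), min_eq_left (by nlinarith)]
    · rw [min_eq_right h1]; ring_nf

set_option maxHeartbeats 1600000 in
/-- semantics of ⊙^k as scaled multiplication. -/
theorem odotPow_val (k : ℕ) (hk : 8 ≤ k) (V : ℕ → ℝ) (hV : IsValuation V)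
    (φ ψ : RPLForm) (l l' : ℝ)
    (hl : -Real.sqrt k ≤ l ∧ l ≤ Real.sqrt k)
    (hl' : -Real.sqrt k ≤ l' ∧ l' ≤ Real.sqrt k)
    (hφ : φ.val V = scaleK k l) (hψ : ψ.val V = scaleK k l') :
    (RPLForm.odotPow k (by omega) φ ψ).val V = scaleK k (l * l') := by
  obtain ⟨hl1, hl2⟩ := hl
  obtain ⟨hl'1, hl'2⟩ := hl'
  have hK : (8:ℝ) ≤ (k:ℝ) := by exact_mod_cast hk
  set K : ℝ := (k:ℝ) with hKdef
  clear_value K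
  have hKpos : (0:ℝ) < K := by linarith
  set s : ℝ := Real.sqrt K with hsdef
  clear_value s
  have hs0 : 0 ≤ s := by rw [hsdef]; exact Real.sqrt_nonneg _
  have hs2 : s * s = K := by rw [hsdef]; exact Real.mul_self_sqrt (by linarith)
  have hs : (2.82:ℝ) ≤ s := by nlinarith
  have hsK : s ≤ K / 2 := by nlinarith
  set a : ℝ := (K + l) / (2 * K) with hadef
  set b : ℝ := (K + l') / (2 * K) with hbdef
  clear_value a b
  have ha : φ.val V = a := by rw [hφ, hadef]; rfl
  have hb : ψ.val V = b := by rw [hψ, hbdef]; rfl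
  have ha1 : (1:ℝ)/4 ≤ a := by
    rw [hadef, le_div_iff₀ (by linarith)]; nlinarith
  have ha2 : a ≤ (3:ℝ)/4 := by
    rw [hadef, div_le_iff₀ (by linarith)]; nlinarith
  have hb1 : (1:ℝ)/4 ≤ b := by
    rw [hbdef, le_div_iff₀ (by linarith)]; nlinarith
  have hb2 : b ≤ (3:ℝ)/4 := by
    rw [hbdef, div_le_iff₀ (by linarith)]; nlinarith
  have p1 : (0:ℝ) ≤ (s - l) * (s - l') :=
    mul_nonneg (by linarith) (by linarith)
  have p2 : (0:ℝ) ≤ (s + l) * (s + l') :=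
    mul_nonneg (by linarith) (by linarith)
  have p3 : (0:ℝ) ≤ (s + l) * (s - l') :=
    mul_nonneg (by linarith) (by linarith)
  have p4 : (0:ℝ) ≤ (s - l) * (s + l') :=
    mul_nonneg (by linarith) (by linarith)
  have hll1 : l * l' ≤ K := by nlinarith [p3, p4]
  have hll2 : -K ≤ l * l' := by nlinarith [p1, p2]
  have hfrac : 2 * (a * b) + 1 / (2 * K) = ((K + l) * (K + l') + K) / (2 * K ^ 2) := by
    rw [hadef, hbdef]; field_simp
  have hbound : 2 * (a * b) + 1 / (2 * K) ≤ 1 := by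
    rw [hfrac, div_le_one (by positivity)]
    nlinarith [p1, p2, p3, p4,
      mul_nonneg (mul_nonneg hs0 hs0) (by linarith : (0:ℝ) ≤ s - 2.82),
      mul_nonneg hs0 (by linarith : (0:ℝ) ≤ s - 2.82)]
  have hconj : (φ.conj ψ).val V = a * b := by
    simp only [RPLForm.val, ha, hb]
  have hab0 : (0:ℝ) ≤ a * b := by nlinarith
  have hB2 : (RPLForm.bigOplus 2 (φ.conj ψ)).val V = 2 * (a * b) := by
    rw [val_bigOplus_aux _ _ (by rw [hconj]; exact hab0) 2, hconj]
    have hK2 : 0 < 1 / (2 * K) := by positivity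
    rw [min_eq_right (by push_cast; linarith)]
    push_cast; ring
  have hk1 : 1 ≤ k := by omega
  have hconst : (RPLForm.const ⟨1 / (2 * (k : ℚ)), inv2k_mem k hk1⟩).val V = 1 / (2 * K) := by
    show ((1 / (2 * (k : ℚ)) : ℚ) : ℝ) = 1 / (2 * K)
    rw [hKdef]
    push_cast
    ring
  have hOp : ((RPLForm.bigOplus 2 (φ.conj ψ)).oplus
      (.const ⟨1 / (2 * (k : ℚ)), inv2k_mem k hk1⟩)).val V = 2 * (a * b) + 1 / (2 * K) := by
    rw [val_oplus_aux _ _ _ (by rw [hB2]; positivity), hB2, hconst, min_eq_right hbound]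
  have hom1 : (φ.ominus (.const ⟨1/4, by norm_num⟩)).val V = a - 1/4 := by
    rw [val_ominus_aux _ _ _ (by rw [ha]; linarith) (by norm_num [RPLForm.val]) (by norm_num [RPLForm.val])]
    have h14 : (RPLForm.const ⟨1/4, by norm_num⟩).val V = 1/4 := by norm_num [RPLForm.val]
    rw [ha, h14, max_eq_right (by linarith)]
  have hom2 : (ψ.ominus (.const ⟨1/4, by norm_num⟩)).val V = b - 1/4 := by
    rw [val_ominus_aux _ _ _ (by rw [hb]; linarith) (by norm_num [RPLForm.val]) (by norm_num [RPLForm.val])]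
    have h14 : (RPLForm.const ⟨1/4, by norm_num⟩).val V = 1/4 := by norm_num [RPLForm.val]
    rw [hb, h14, max_eq_right (by linarith)]
  have hOp' : (φ.oplus' ψ).val V = a + b - 1/2 := by
    rw [RPLForm.oplus', val_oplus_aux _ _ _ (by rw [hom1]; linarith), hom1, hom2,
      min_eq_right (by linarith)]
    ring
  have hcval : 2 * (a * b) + 1 / (2 * K) - (a + b - 1/2) = (K + l * l') / (2 * K ^ 2) := by
    rw [hadef, hbdef]; field_simp; ring
  have hinner : (((RPLForm.bigOplus 2 (φ.conj ψ)).oplus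
      (.const ⟨1 / (2 * (k : ℚ)), inv2k_mem k hk1⟩)).ominus (φ.oplus' ψ)).val V
      = (K + l * l') / (2 * K ^ 2) := by
    rw [val_ominus_aux _ _ _ (by rw [hOp]; exact hbound)
      (by rw [hOp']; linarith) (by rw [hOp']; linarith), hOp, hOp', hcval,
      max_eq_right (div_nonneg (by linarith) (by positivity))]
  rw [RPLForm.odotPow, val_bigOplus_aux _ _ (by
      rw [hinner]; exact div_nonneg (by linarith) (by positivity)) k, hinner, ← hKdef]
  have hmul : K * ((K + l * l') / (2 * K ^ 2)) = (K + l * l') / (2 * K) := by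
    rw [hKdef]; field_simp
  rw [hmul, min_eq_right (by rw [div_le_one (by linarith)]; linarith)]
  rfl
end

section
/- For each term t of ℚ[ReLU, x_i]_{i∈ℕ} and each real i > 0, there exists a positive integer K such that for each integer k ≥ K there exists a formula φ_t of RPL(⊙) that is (i,k)-equivalent to t. Moreover, for all d ∈ ℕ, if deg(t) ≤ d then φ_t can be taken to be a formula of RPL(⊙)_{≤d}. -/
section Aux

open RPLForm

/-- The truth constant ½̄. -/
def halfC : RPLForm := .const ⟨1/2, by norm_num⟩

lemma val_halfC (V : ℕ → ℝ) : halfC.val V = 1/2 := by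
  norm_num [halfC, RPLForm.val]

lemma val_conj (α β : RPLForm) (V : ℕ → ℝ) :
    (α.conj β).val V = α.val V * β.val V := rfl

lemma val_impL (α β : RPLForm) (V : ℕ → ℝ) :
    (α.impL β).val V = min 1 (1 - α.val V + β.val V) := rfl

lemma val_negL {φ : RPLForm} {V : ℕ → ℝ} (h : 0 ≤ φ.val V) :
    φ.negL.val V = 1 - φ.val V := by
  simp only [RPLForm.negL, RPLForm.zeroC, RPLForm.val, add_zero]
  rw [show ((⟨0, by norm_num⟩ : {r : ℚ // 0 ≤ r ∧ r ≤ 1}).1 : ℝ) = 0 by norm_num, add_zero]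
  exact min_eq_right (by linarith)

lemma val_oplus {φ ψ : RPLForm} {V : ℕ → ℝ} (h : 0 ≤ φ.val V) :
    (φ.oplus ψ).val V = min 1 (φ.val V + ψ.val V) := by
  simp only [RPLForm.oplus, val_impL, val_negL h]
  congr 1; ring

lemma val_otimes {φ ψ : RPLForm} {V : ℕ → ℝ} (ha0 : 0 ≤ φ.val V) (ha1 : φ.val V ≤ 1)
    (hb0 : 0 ≤ ψ.val V) (hb1 : ψ.val V ≤ 1) :
    (φ.otimes ψ).val V = max 0 (φ.val V + ψ.val V - 1) := by
  have hin : (φ.impL ψ.negL).val V = min 1 (2 - φ.val V - ψ.val V) := by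
    rw [val_impL, val_negL hb0]; congr 1; ring
  have h0 : 0 ≤ (φ.impL ψ.negL).val V := by
    rw [hin]; exact le_min (by norm_num) (by linarith)
  rw [RPLForm.otimes, val_negL h0, hin]
  rcases le_total (φ.val V + ψ.val V) 1 with h | h
  · rw [min_eq_left (by linarith), max_eq_left (by linarith)]; ring
  · rw [min_eq_right (by linarith), max_eq_right (by linarith)]; ring

lemma val_ominus {φ ψ : RPLForm} {V : ℕ → ℝ} (ha0 : 0 ≤ φ.val V) (ha1 : φ.val V ≤ 1)
    (hb0 : 0 ≤ ψ.val V) (hb1 : ψ.val V ≤ 1) :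
    (φ.ominus ψ).val V = max 0 (φ.val V - ψ.val V) := by
  have h1 := val_negL hb0
  rw [RPLForm.ominus, val_otimes ha0 ha1 (by rw [h1]; linarith) (by rw [h1]; linarith), h1]
  congr 1; ring

lemma val_bigOplus {φ : RPLForm} {V : ℕ → ℝ} (h0 : 0 ≤ φ.val V) (n : ℕ) :
    (RPLForm.bigOplus n φ).val V = min 1 ((n : ℝ) * φ.val V) := by
  induction n with
  | zero =>
    simp only [RPLForm.bigOplus, RPLForm.zeroC, RPLForm.val]
    norm_num
  | succ n ih =>
    have hprev : 0 ≤ (RPLForm.bigOplus n φ).val V := by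
      rw [ih]; exact le_min (by norm_num) (by positivity)
    rw [RPLForm.bigOplus, val_oplus hprev, ih]
    rcases le_total ((n : ℝ) * φ.val V) 1 with h | h
    · rw [min_eq_right h]; push_cast; congr 1; ring
    · rw [min_eq_left h, min_eq_left (by linarith), min_eq_left]
      push_cast; nlinarith

end Aux

section Aux2

/-- Formula for addition: value a + b − ½ (when in [0,1]). -/
def addF (φ ψ : RPLForm) : RPLForm := (φ.ominus (halfC.ominus ψ)).oplus (ψ.ominus halfC)

/-- Formula for ReLU: value max ½ a. -/
def reluF (φ : RPLForm) : RPLForm := (φ.ominus halfC).oplus halfC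

/-- min 1 (2k · value α · value β). -/
def prodPart (k : ℕ) (α β : RPLForm) : RPLForm := RPLForm.bigOplus (2*k) (α.conj β)

/-- Formula for multiplication. -/
def mulF (k : ℕ) (φ ψ : RPLForm) : RPLForm :=
  ((((halfC.oplus (prodPart k (φ.ominus halfC) (ψ.ominus halfC))).oplus
      (prodPart k (halfC.ominus φ) (halfC.ominus ψ))).ominus
      (prodPart k (φ.ominus halfC) (halfC.ominus ψ))).ominus
      (prodPart k (halfC.ominus φ) (ψ.ominus halfC)))

lemma half_bounds (V : ℕ → ℝ) : 0 ≤ halfC.val V ∧ halfC.val V ≤ 1 := by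
  rw [val_halfC]; norm_num

lemma val_addF {φ ψ : RPLForm} {V : ℕ → ℝ} (ha0 : 0 ≤ φ.val V) (ha1 : φ.val V ≤ 1)
    (hb0 : 0 ≤ ψ.val V) (hb1 : ψ.val V ≤ 1)
    (hs0 : 1/2 ≤ φ.val V + ψ.val V) (hs1 : φ.val V + ψ.val V ≤ 3/2) :
    (addF φ ψ).val V = φ.val V + ψ.val V - 1/2 := by
  set a := φ.val V with hA
  set b := ψ.val V with hB
  have h1 : (halfC.ominus ψ).val V = max 0 (1/2 - b) := by
    rw [val_ominus (half_bounds V).1 (half_bounds V).2 hb0 hb1, val_halfC]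
  have h1b0 : 0 ≤ (halfC.ominus ψ).val V := by rw [h1]; exact le_max_left _ _
  have h1b1 : (halfC.ominus ψ).val V ≤ 1 := by
    rw [h1]; exact max_le (by norm_num) (by linarith)
  have h2 : (φ.ominus (halfC.ominus ψ)).val V = max 0 (a - max 0 (1/2 - b)) := by
    rw [val_ominus ha0 ha1 h1b0 h1b1, h1]
  have h3 : (ψ.ominus halfC).val V = max 0 (b - 1/2) := by
    rw [val_ominus hb0 hb1 (half_bounds V).1 (half_bounds V).2, val_halfC]
  have h2b0 : 0 ≤ (φ.ominus (halfC.ominus ψ)).val V := by rw [h2]; exact le_max_left _ _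
  rw [addF, val_oplus h2b0, h2, h3]
  rcases le_total b (1/2) with h | h
  · have m1 : max 0 (1/2 - b) = 1/2 - b := max_eq_right (by linarith)
    rw [m1]
    have m2 : max 0 (a - (1/2 - b)) = a - (1/2 - b) := max_eq_right (by linarith)
    have m3 : max 0 (b - 1/2) = 0 := max_eq_left (by linarith)
    rw [m2, m3, min_eq_right (by linarith)]
    ring
  · have m1 : max 0 (1/2 - b) = 0 := max_eq_left (by linarith)
    rw [m1, sub_zero]
    have m2 : max 0 a = a := max_eq_right ha0
    have m3 : max 0 (b - 1/2) = b - 1/2 := max_eq_right (by linarith)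
    rw [m2, m3, min_eq_right (by linarith)]
    ring

lemma val_reluF {φ : RPLForm} {V : ℕ → ℝ} (ha0 : 0 ≤ φ.val V) (ha1 : φ.val V ≤ 1) :
    (reluF φ).val V = max (1/2) (φ.val V) := by
  have h1 : (φ.ominus halfC).val V = max 0 (φ.val V - 1/2) := by
    rw [val_ominus ha0 ha1 (half_bounds V).1 (half_bounds V).2, val_halfC]
  have h1b : 0 ≤ (φ.ominus halfC).val V := by rw [h1]; exact le_max_left _ _
  rw [reluF, val_oplus h1b, h1, val_halfC]
  rcases le_total (φ.val V) (1/2) with h | h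
  · have m1 : max 0 (φ.val V - 1/2) = 0 := max_eq_left (by linarith)
    have m2 : max (1/2) (φ.val V) = 1/2 := max_eq_left (by linarith)
    rw [m1, m2, min_eq_right (by norm_num)]
    norm_num
  · have m1 : max 0 (φ.val V - 1/2) = φ.val V - 1/2 := max_eq_right (by linarith)
    have m2 : max (1/2) (φ.val V) = φ.val V := max_eq_right (by linarith)
    rw [m1, m2, min_eq_right (by linarith)]
    ring

lemma max_sub_max (z : ℝ) : max 0 z - max 0 (-z) = z := by
  rcases le_total z 0 with h | h
  · rw [max_eq_left h, max_eq_right (by linarith)]; ring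
  · rw [max_eq_right h, max_eq_left (by linarith)]; ring

lemma max_add_max (z : ℝ) : max 0 z + max 0 (-z) = |z| := by
  rcases le_total z 0 with h | h
  · rw [max_eq_left h, max_eq_right (by linarith), abs_of_nonpos h]; ring
  · rw [max_eq_right h, max_eq_left (by linarith), abs_of_nonneg h]; ring

lemma val_mulF {φ ψ : RPLForm} {V : ℕ → ℝ} (k : ℕ) (ha0 : 0 ≤ φ.val V) (ha1 : φ.val V ≤ 1)
    (hb0 : 0 ≤ ψ.val V) (hb1 : ψ.val V ≤ 1)
    (hbound : 2*(k:ℝ)*(|φ.val V - 1/2| * |ψ.val V - 1/2|) ≤ 1/2) :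
    (mulF k φ ψ).val V = 1/2 + 2*(k:ℝ)*((φ.val V - 1/2)*(ψ.val V - 1/2)) := by
  set a := φ.val V with hA
  set b := ψ.val V with hB
  set u := max 0 (a - 1/2) with hu
  set u' := max 0 (1/2 - a) with hu'
  set v := max 0 (b - 1/2) with hv
  set v' := max 0 (1/2 - b) with hv'
  have hu0 : 0 ≤ u := le_max_left _ _
  have hu'0 : 0 ≤ u' := le_max_left _ _
  have hv0 : 0 ≤ v := le_max_left _ _
  have hv'0 : 0 ≤ v' := le_max_left _ _
  have hu1 : u ≤ 1 := max_le (by norm_num) (by linarith)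
  have hu'1 : u' ≤ 1 := max_le (by norm_num) (by linarith)
  have hv1 : v ≤ 1 := max_le (by norm_num) (by linarith)
  have hv'1 : v' ≤ 1 := max_le (by norm_num) (by linarith)
  have huu : u + u' = |a - 1/2| := by
    rw [hu, hu']; rw [show (1/2 - a) = -(a - 1/2) by ring]; exact max_add_max _
  have hvv : v + v' = |b - 1/2| := by
    rw [hv, hv']; rw [show (1/2 - b) = -(b - 1/2) by ring]; exact max_add_max _
  have husub : u - u' = a - 1/2 := by
    rw [hu, hu']; rw [show (1/2 - a) = -(a - 1/2) by ring]; exact max_sub_max _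
  have hvsub : v - v' = b - 1/2 := by
    rw [hv, hv']; rw [show (1/2 - b) = -(b - 1/2) by ring]; exact max_sub_max _
  -- values of the four basic ominus-formulae
  have e1 : (φ.ominus halfC).val V = u := by
    rw [val_ominus ha0 ha1 (half_bounds V).1 (half_bounds V).2, val_halfC]
  have e2 : (halfC.ominus φ).val V = u' := by
    rw [val_ominus (half_bounds V).1 (half_bounds V).2 ha0 ha1, val_halfC]
  have e3 : (ψ.ominus halfC).val V = v := by
    rw [val_ominus hb0 hb1 (half_bounds V).1 (half_bounds V).2, val_halfC]
  have e4 : (halfC.ominus ψ).val V = v' := by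
    rw [val_ominus (half_bounds V).1 (half_bounds V).2 hb0 hb1, val_halfC]
  -- sum bound
  have hsum : 2*(k:ℝ)*(u*v) + 2*(k:ℝ)*(u'*v') + 2*(k:ℝ)*(u*v') + 2*(k:ℝ)*(u'*v)
      ≤ 1/2 := by
    have : 2*(k:ℝ)*(u*v) + 2*(k:ℝ)*(u'*v') + 2*(k:ℝ)*(u*v') + 2*(k:ℝ)*(u'*v)
        = 2*(k:ℝ)*((u+u')*(v+v')) := by ring
    rw [this, huu, hvv]; exact hbound
  have hk0 : (0:ℝ) ≤ 2*(k:ℝ)*(u*v) := by positivity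
  have hk0' : (0:ℝ) ≤ 2*(k:ℝ)*(u'*v') := by positivity
  have hk0'' : (0:ℝ) ≤ 2*(k:ℝ)*(u*v') := by positivity
  have hk0''' : (0:ℝ) ≤ 2*(k:ℝ)*(u'*v) := by positivity
  -- values of prodParts
  have hpp : ∀ (α β : RPLForm) (w1 w2 : ℝ), α.val V = w1 → β.val V = w2 → 0 ≤ w1 → 0 ≤ w2 →
      2*(k:ℝ)*(w1*w2) ≤ 1 → (prodPart k α β).val V = 2*(k:ℝ)*(w1*w2) := by
    intro α β w1 w2 hα hβ h1 h2 hle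
    have hc : (α.conj β).val V = w1 * w2 := by rw [val_conj, hα, hβ]
    rw [prodPart, val_bigOplus (by rw [hc]; positivity) (2*k), hc,
      min_eq_right (by push_cast; linarith)]
    push_cast; ring
  have hp1 := hpp _ _ u v e1 e3 hu0 hv0 (by linarith)
  have hp2 := hpp _ _ u' v' e2 e4 hu'0 hv'0 (by linarith)
  have hp3 := hpp _ _ u v' e1 e4 hu0 hv'0 (by linarith)
  have hp4 := hpp _ _ u' v e2 e3 hu'0 hv0 (by linarith)
  -- the chain
  have hs1 : (halfC.oplus (prodPart k (φ.ominus halfC) (ψ.ominus halfC))).val V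
      = 1/2 + 2*(k:ℝ)*(u*v) := by
    rw [val_oplus (half_bounds V).1, val_halfC, hp1, min_eq_right (by linarith)]
  have hs2 : ((halfC.oplus (prodPart k (φ.ominus halfC) (ψ.ominus halfC))).oplus
      (prodPart k (halfC.ominus φ) (halfC.ominus ψ))).val V
      = 1/2 + 2*(k:ℝ)*(u*v) + 2*(k:ℝ)*(u'*v') := by
    rw [val_oplus (by rw [hs1]; linarith), hs1, hp2, min_eq_right (by linarith)]
  have hs3 : (((halfC.oplus (prodPart k (φ.ominus halfC) (ψ.ominus halfC))).oplus
      (prodPart k (halfC.ominus φ) (halfC.ominus ψ))).ominus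
      (prodPart k (φ.ominus halfC) (halfC.ominus ψ))).val V
      = 1/2 + 2*(k:ℝ)*(u*v) + 2*(k:ℝ)*(u'*v') - 2*(k:ℝ)*(u*v') := by
    rw [val_ominus (by rw [hs2]; linarith) (by rw [hs2]; linarith)
      (by rw [hp3]; linarith) (by rw [hp3]; linarith), hs2, hp3,
      max_eq_right (by linarith)]
  have hs4 : (mulF k φ ψ).val V
      = 1/2 + 2*(k:ℝ)*(u*v) + 2*(k:ℝ)*(u'*v') - 2*(k:ℝ)*(u*v') - 2*(k:ℝ)*(u'*v) := by
    rw [mulF, val_ominus (by rw [hs3]; linarith) (by rw [hs3]; linarith)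
      (by rw [hp4]; linarith) (by rw [hp4]; linarith), hs3, hp4,
      max_eq_right (by linarith)]
  rw [hs4]
  have : 2*(k:ℝ)*(u*v) + 2*(k:ℝ)*(u'*v') - 2*(k:ℝ)*(u*v') - 2*(k:ℝ)*(u'*v)
      = 2*(k:ℝ)*((u-u')*(v-v')) := by ring
  have hfin : (1:ℝ)/2 + 2*(k:ℝ)*(u*v) + 2*(k:ℝ)*(u'*v') - 2*(k:ℝ)*(u*v') - 2*(k:ℝ)*(u'*v)
      = 1/2 + 2*(k:ℝ)*((u-u')*(v-v')) := by ring
  rw [hfin, husub, hvsub]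

end Aux2

section Frag

lemma propFree_of_inFrag_zero {φ : RPLForm} (h : RPLForm.InFrag 0 φ) : φ.propFree := by
  cases h with
  | propfree h => exact h

lemma frag_mono {n m : ℕ} {φ : RPLForm} (h : RPLForm.InFrag n φ) (hnm : n ≤ m) :
    RPLForm.InFrag m φ := by
  induction m with
  | zero => have hn : n = 0 := by omega
            exact hn ▸ h
  | succ m ih =>
    rcases Nat.lt_or_ge n (m+1) with h' | h'
    · exact .up (ih (by omega))
    · have hn : n = m + 1 := by omega
      exact hn ▸ h

lemma frag_impL {n : ℕ} {φ ψ : RPLForm} (h1 : RPLForm.InFrag n φ) (h2 : RPLForm.InFrag n ψ) :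
    RPLForm.InFrag n (φ.impL ψ) := by
  cases n with
  | zero => exact .propfree ⟨propFree_of_inFrag_zero h1, propFree_of_inFrag_zero h2⟩
  | succ n => exact .impL h1 h2

lemma frag_conj {i j d : ℕ} {α β : RPLForm} (h1 : RPLForm.InFrag i α)
    (h2 : RPLForm.InFrag j β) (hd : i + j ≤ d) : RPLForm.InFrag d (α.conj β) := by
  cases d with
  | zero =>
    have hi : i = 0 := by omega
    have hj : j = 0 := by omega
    exact .propfree ⟨propFree_of_inFrag_zero (hi ▸ h1), propFree_of_inFrag_zero (hj ▸ h2)⟩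
  | succ d => exact .conj h1 h2 hd

lemma frag_const {n : ℕ} (r : {r : ℚ // 0 ≤ r ∧ r ≤ 1}) :
    RPLForm.InFrag n (.const r) := .propfree trivial

lemma frag_zeroC {n : ℕ} : RPLForm.InFrag n RPLForm.zeroC := frag_const _

lemma frag_halfC {n : ℕ} : RPLForm.InFrag n halfC := frag_const _

lemma frag_negL {n : ℕ} {φ : RPLForm} (h : RPLForm.InFrag n φ) :
    RPLForm.InFrag n φ.negL := frag_impL h frag_zeroC

lemma frag_oplus {n : ℕ} {φ ψ : RPLForm} (h1 : RPLForm.InFrag n φ)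
    (h2 : RPLForm.InFrag n ψ) : RPLForm.InFrag n (φ.oplus ψ) :=
  frag_impL (frag_negL h1) h2

lemma frag_otimes {n : ℕ} {φ ψ : RPLForm} (h1 : RPLForm.InFrag n φ)
    (h2 : RPLForm.InFrag n ψ) : RPLForm.InFrag n (φ.otimes ψ) :=
  frag_negL (frag_impL h1 (frag_negL h2))

lemma frag_ominus {n : ℕ} {φ ψ : RPLForm} (h1 : RPLForm.InFrag n φ)
    (h2 : RPLForm.InFrag n ψ) : RPLForm.InFrag n (φ.ominus ψ) :=
  frag_otimes h1 (frag_negL h2)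

lemma frag_bigOplus {n : ℕ} {φ : RPLForm} (h : RPLForm.InFrag n φ) (m : ℕ) :
    RPLForm.InFrag n (RPLForm.bigOplus m φ) := by
  induction m with
  | zero => exact frag_zeroC
  | succ m ih => exact frag_oplus ih h

lemma frag_addF {n : ℕ} {φ ψ : RPLForm} (h1 : RPLForm.InFrag n φ)
    (h2 : RPLForm.InFrag n ψ) : RPLForm.InFrag n (addF φ ψ) :=
  frag_oplus (frag_ominus h1 (frag_ominus frag_halfC h2)) (frag_ominus h2 frag_halfC)

lemma frag_reluF {n : ℕ} {φ : RPLForm} (h : RPLForm.InFrag n φ) :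
    RPLForm.InFrag n (reluF φ) :=
  frag_oplus (frag_ominus h frag_halfC) frag_halfC

lemma frag_mulF {i j d k : ℕ} {φ ψ : RPLForm} (h1 : RPLForm.InFrag i φ)
    (h2 : RPLForm.InFrag j ψ) (hd : i + j ≤ d) : RPLForm.InFrag d (mulF k φ ψ) := by
  have c1 : RPLForm.InFrag d ((φ.ominus halfC).conj (ψ.ominus halfC)) :=
    frag_conj (frag_ominus h1 frag_halfC) (frag_ominus h2 frag_halfC) hd
  have c2 : RPLForm.InFrag d ((halfC.ominus φ).conj (halfC.ominus ψ)) :=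
    frag_conj (frag_ominus frag_halfC h1) (frag_ominus frag_halfC h2) hd
  have c3 : RPLForm.InFrag d ((φ.ominus halfC).conj (halfC.ominus ψ)) :=
    frag_conj (frag_ominus h1 frag_halfC) (frag_ominus frag_halfC h2) hd
  have c4 : RPLForm.InFrag d ((halfC.ominus φ).conj (ψ.ominus halfC)) :=
    frag_conj (frag_ominus frag_halfC h1) (frag_ominus h2 frag_halfC) hd
  exact frag_ominus (frag_ominus (frag_oplus (frag_oplus frag_halfC
    (frag_bigOplus c1 _)) (frag_bigOplus c2 _)) (frag_bigOplus c3 _)) (frag_bigOplus c4 _)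

end Frag

section ScaleK

lemma scaleK_def {k : ℝ} (x : ℝ) (hk : k ≠ 0) : scaleK k x = 1/2 + x/(2*k) := by
  unfold scaleK; field_simp

lemma div_bounds {k x : ℝ} (hk : 0 < k) (h : |x| ≤ k) :
    -(1/2) ≤ x/(2*k) ∧ x/(2*k) ≤ 1/2 := by
  rw [abs_le] at h
  constructor
  · rw [le_div_iff₀ (by linarith)]; linarith
  · rw [div_le_iff₀ (by linarith)]; linarith

end ScaleK

theorem main_aux (i : ℝ) (hi : 0 < i) (t : RTerm) :
    ∃ K : ℕ, 1 ≤ K ∧ (∀ E : ℕ → ℝ, (∀ x, -i ≤ E x ∧ E x ≤ i) → |t.eval E| ≤ (K:ℝ)) ∧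
      ∀ k : ℕ, K ≤ k → ∃ φ : RPLForm, IKEquiv i (k : ℝ) φ t ∧ RPLForm.InFrag t.deg φ := by
  induction t with
  | const r =>
    refine ⟨max 1 ⌈|r|⌉₊, le_max_left _ _, ?_, ?_⟩
    · intro E hE
      simp only [RTerm.eval]
      have h1 : (|r|:ℚ) ≤ ((max 1 ⌈|r|⌉₊ : ℕ) : ℚ) := by
        calc (|r|:ℚ) ≤ (⌈|r|⌉₊ : ℚ) := Nat.le_ceil _
          _ ≤ _ := by exact_mod_cast le_max_right 1 ⌈|r|⌉₊
      calc |(r:ℝ)| = ((|r|:ℚ):ℝ) := by push_cast; rfl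
        _ ≤ _ := by exact_mod_cast h1
    · intro k hk
      have hk1 : 1 ≤ k := le_trans (le_max_left _ _) hk
      have hrk : |r| ≤ (k:ℚ) := by
        calc |r| ≤ (⌈|r|⌉₊ : ℚ) := Nat.le_ceil _
          _ ≤ (k:ℚ) := by exact_mod_cast le_trans (le_max_right _ _) hk
      rw [abs_le] at hrk
      have hq : (0:ℚ) < 2 * k := by
        have : (1:ℚ) ≤ k := by exact_mod_cast hk1
        linarith
      refine ⟨.const ⟨(k + r)/(2*k), ?_, ?_⟩, ?_, ?_⟩
      · apply div_nonneg _ (le_of_lt hq); linarith [hrk.1]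
      · rw [div_le_one hq]; linarith [hrk.2]
      · intro E hE
        simp only [RPLForm.val, RTerm.eval]
        unfold scaleK
        push_cast
        ring
      · exact frag_const _
  | var x =>
    refine ⟨max 1 ⌈i⌉₊, le_max_left _ _, ?_, ?_⟩
    · intro E hE
      have h1 : i ≤ ((max 1 ⌈i⌉₊ : ℕ) : ℝ) := by
        calc i ≤ (⌈i⌉₊ : ℝ) := Nat.le_ceil _
          _ ≤ _ := by exact_mod_cast le_max_right 1 ⌈i⌉₊
      have h2 := hE x
      simp only [RTerm.eval]
      rw [abs_le]
      exact ⟨by linarith [h2.1], by linarith [h2.2]⟩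
    · intro k hk
      refine ⟨.prop x, fun E hE => rfl, ?_⟩
      exact RPLForm.InFrag.prop x
  | add t t' ih ih' =>
    obtain ⟨K1, hK1, hB1, hF1⟩ := ih
    obtain ⟨K2, hK2, hB2, hF2⟩ := ih'
    refine ⟨K1 + K2, by omega, ?_, ?_⟩
    · intro E hE
      simp only [RTerm.eval]
      push_cast
      calc |t.eval E + t'.eval E| ≤ |t.eval E| + |t'.eval E| := abs_add_le _ _
        _ ≤ (K1:ℝ) + (K2:ℝ) := by linarith [hB1 E hE, hB2 E hE]
    · intro k hk
      have hK1k : (K1:ℝ) ≤ (k:ℝ) := by exact_mod_cast (by omega : K1 ≤ k)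
      have hK2k : (K2:ℝ) ≤ (k:ℝ) := by exact_mod_cast (by omega : K2 ≤ k)
      have hKk : (K1:ℝ) + (K2:ℝ) ≤ (k:ℝ) := by
        have : ((K1 + K2 : ℕ):ℝ) ≤ (k:ℝ) := Nat.cast_le.mpr hk
        push_cast at this; linarith
      have hk1 : (1:ℝ) ≤ (k:ℝ) := by exact_mod_cast (by omega : 1 ≤ k)
      have hkpos : (0:ℝ) < (k:ℝ) := by linarith
      have hkne : ((k:ℝ)) ≠ 0 := ne_of_gt hkpos
      obtain ⟨φ1, he1, hf1⟩ := hF1 k (by omega)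
      obtain ⟨φ2, he2, hf2⟩ := hF2 k (by omega)
      refine ⟨addF φ1 φ2, ?_, ?_⟩
      · intro E hE
        set V := fun p => scaleK (k:ℝ) (E p) with hV
        set x := t.eval E with hx
        set y := t'.eval E with hy
        have ha : φ1.val V = 1/2 + x/(2*(k:ℝ)) := by rw [he1 E hE, scaleK_def _ hkne]
        have hb : φ2.val V = 1/2 + y/(2*(k:ℝ)) := by rw [he2 E hE, scaleK_def _ hkne]
        obtain ⟨hx1, hx2⟩ := div_bounds hkpos (le_trans (hB1 E hE) hK1k)
        obtain ⟨hy1, hy2⟩ := div_bounds hkpos (le_trans (hB2 E hE) hK2k)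
        have hxyk : |x + y| ≤ (k:ℝ) :=
          le_trans (abs_add_le _ _) (le_trans (add_le_add (hB1 E hE) (hB2 E hE)) hKk)
        obtain ⟨hs1, hs2⟩ := div_bounds hkpos hxyk
        have hdiv : x/(2*(k:ℝ)) + y/(2*(k:ℝ)) = (x+y)/(2*(k:ℝ)) := by ring
        have hgoal : (RTerm.add t t').eval E = x + y := rfl
        rw [hgoal, scaleK_def _ hkne,
          val_addF (by rw [ha]; linarith) (by rw [ha]; linarith)
            (by rw [hb]; linarith) (by rw [hb]; linarith)
            (by rw [ha, hb]; linarith) (by rw [ha, hb]; linarith),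
          ha, hb]
        ring
      · exact frag_addF (frag_mono hf1 (le_max_left _ _)) (frag_mono hf2 (le_max_right _ _))
  | mul t t' ih ih' =>
    obtain ⟨K1, hK1, hB1, hF1⟩ := ih
    obtain ⟨K2, hK2, hB2, hF2⟩ := ih'
    have hA1 : K1 ≤ K1 * K2 + K1 + K2 :=
      le_trans (Nat.le_add_left K1 (K1*K2)) (Nat.le_add_right _ _)
    have hA2 : K2 ≤ K1 * K2 + K1 + K2 := Nat.le_add_left _ _
    have hA3 : K1 * K2 ≤ K1 * K2 + K1 + K2 :=
      le_trans (Nat.le_add_right _ _) (Nat.le_add_right _ _)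
    refine ⟨K1 * K2 + K1 + K2, le_trans hK1 hA1, ?_, ?_⟩
    · intro E hE
      simp only [RTerm.eval, abs_mul]
      push_cast
      have h12 : |t.eval E| * |t'.eval E| ≤ (K1:ℝ) * (K2:ℝ) :=
        mul_le_mul (hB1 E hE) (hB2 E hE) (abs_nonneg _) (Nat.cast_nonneg _)
      have hc1 : (0:ℝ) ≤ (K1:ℝ) := Nat.cast_nonneg _
      have hc2 : (0:ℝ) ≤ (K2:ℝ) := Nat.cast_nonneg _
      linarith
    · intro k hk
      have hK1k : (K1:ℝ) ≤ (k:ℝ) := by exact_mod_cast le_trans hA1 hk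
      have hK2k : (K2:ℝ) ≤ (k:ℝ) := by exact_mod_cast le_trans hA2 hk
      have hK12k : (K1:ℝ) * (K2:ℝ) ≤ (k:ℝ) := by
        have h : ((K1 * K2 : ℕ):ℝ) ≤ ((k:ℕ):ℝ) := Nat.cast_le.mpr (le_trans hA3 hk)
        push_cast at h; linarith
      have hk1 : (1:ℝ) ≤ (k:ℝ) := by exact_mod_cast le_trans (le_trans hK1 hA1) hk
      have hkpos : (0:ℝ) < (k:ℝ) := by linarith
      have hkne : ((k:ℝ)) ≠ 0 := ne_of_gt hkpos
      have h2k : (0:ℝ) < 2*(k:ℝ) := by linarith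
      obtain ⟨φ1, he1, hf1⟩ := hF1 k (le_trans hA1 hk)
      obtain ⟨φ2, he2, hf2⟩ := hF2 k (le_trans hA2 hk)
      refine ⟨mulF k φ1 φ2, ?_, ?_⟩
      · intro E hE
        set V := fun p => scaleK (k:ℝ) (E p) with hV
        set x := t.eval E with hx
        set y := t'.eval E with hy
        have ha : φ1.val V = 1/2 + x/(2*(k:ℝ)) := by rw [he1 E hE, scaleK_def _ hkne]
        have hb : φ2.val V = 1/2 + y/(2*(k:ℝ)) := by rw [he2 E hE, scaleK_def _ hkne]
        have haa : φ1.val V - 1/2 = x/(2*(k:ℝ)) := by rw [ha]; ring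
        have hbb : φ2.val V - 1/2 = y/(2*(k:ℝ)) := by rw [hb]; ring
        obtain ⟨hx1, hx2⟩ := div_bounds hkpos (le_trans (hB1 E hE) hK1k)
        obtain ⟨hy1, hy2⟩ := div_bounds hkpos (le_trans (hB2 E hE) hK2k)
        have hxyk : |x| * |y| ≤ (k:ℝ) :=
          le_trans (mul_le_mul (hB1 E hE) (hB2 E hE) (abs_nonneg _) (Nat.cast_nonneg _)) hK12k
        have hbound : 2*(k:ℝ)*(|φ1.val V - 1/2| * |φ2.val V - 1/2|) ≤ 1/2 := by
          rw [haa, hbb, abs_div, abs_div, abs_of_pos h2k]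
          have heq : 2*(k:ℝ)*((|x|/(2*(k:ℝ)))*(|y|/(2*(k:ℝ)))) = (|x| * |y|)/(2*(k:ℝ)) := by
            field_simp
          rw [heq, div_le_iff₀ h2k]; linarith
        have hgoal : (RTerm.mul t t').eval E = x * y := rfl
        rw [hgoal, scaleK_def _ hkne,
          val_mulF k (by rw [ha]; linarith) (by rw [ha]; linarith)
            (by rw [hb]; linarith) (by rw [hb]; linarith) hbound, haa, hbb]
        have : 2*(k:ℝ)*((x/(2*(k:ℝ)))*(y/(2*(k:ℝ)))) = x*y/(2*(k:ℝ)) := by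
          field_simp
        linarith
      · exact frag_mulF hf1 hf2 (le_refl _)
  | relu t ih =>
    obtain ⟨K1, hK1, hB1, hF1⟩ := ih
    refine ⟨K1, hK1, ?_, ?_⟩
    · intro E hE
      simp only [RTerm.eval]
      rw [abs_of_nonneg (le_max_left _ _)]
      exact le_trans (max_le (abs_nonneg _) (le_abs_self _)) (hB1 E hE)
    · intro k hk
      have hK1k : (K1:ℝ) ≤ (k:ℝ) := Nat.cast_le.mpr hk
      have hk1 : (1:ℝ) ≤ (k:ℝ) := by exact_mod_cast le_trans hK1 hk
      have hkpos : (0:ℝ) < (k:ℝ) := by linarith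
      have hkne : ((k:ℝ)) ≠ 0 := ne_of_gt hkpos
      obtain ⟨φ1, he1, hf1⟩ := hF1 k hk
      refine ⟨reluF φ1, ?_, ?_⟩
      · intro E hE
        set V := fun p => scaleK (k:ℝ) (E p) with hV
        set x := t.eval E with hx
        have ha : φ1.val V = 1/2 + x/(2*(k:ℝ)) := by rw [he1 E hE, scaleK_def _ hkne]
        obtain ⟨hx1, hx2⟩ := div_bounds hkpos (le_trans (hB1 E hE) hK1k)
        have hgoal : (RTerm.relu t).eval E = max 0 x := rfl
        rw [hgoal, scaleK_def _ hkne,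
          val_reluF (by rw [ha]; linarith) (by rw [ha]; linarith), ha]
        rcases le_total x 0 with h | h
        · have hd : x/(2*(k:ℝ)) ≤ 0 := div_nonpos_of_nonpos_of_nonneg h (by linarith)
          rw [max_eq_left h, max_eq_left (by linarith)]
          norm_num
        · have hd : 0 ≤ x/(2*(k:ℝ)) := div_nonneg h (by linarith)
          rw [max_eq_right h, max_eq_right (by linarith)]
      · exact frag_reluF hf1

/-- translation from terms to RPL(⊙), with degree bound. -/
theorem terms_to_logic (t : RTerm) (i : ℝ) (hi : 0 < i) :
    ∃ K : ℕ, 1 ≤ K ∧ ∀ k : ℕ, K ≤ k →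
      ∃ φ : RPLForm, IKEquiv i (k : ℝ) φ t ∧
        ∀ d : ℕ, t.deg ≤ d → RPLForm.InFrag d φ := by
  obtain ⟨K, hK, _, hF⟩ := main_aux i hi t
  refine ⟨K, hK, fun k hk => ?_⟩
  obtain ⟨φ, he, hf⟩ := hF k hk
  exact ⟨φ, he, fun d hd => frag_mono hf hd⟩
end
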